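/- arXiv:math/0301031 — 4 statements merged into one kernel-verified Lean document; each statement's English description precedes it below -/
import Mathlib

section
/- Let $(A,\mathfrak{m})$ be a local ring and $M$ a finitely presented $A$-module that is not free. Then there exists a local ring homomorphism $A \to B$, an element $b \in B$ with $b \neq 0$ and $b^2 = 0$, and integers $n \geq 0$, $m \geq 1$, such that $M \otimes_A B \cong B^n \oplus (B/(b))^m$ as $B$-modules. -/
/-!
Choose a minimal presentation `A^r → M`: its relation module `K` is nonzero and the ideal `I`
generated by the entries of the relations lies in `𝔪`. By Nakayama there is `x ∈ I \ 𝔪I`, and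
by Zorn an ideal `J` with `𝔪I ⊆ J`, `J + Ax = I` and `x ∉ J`. In `B = A/J` the image `b` of `x`
is nonzero and killed by `𝔪_B` (so `b² = 0`), and every relation becomes `b` times a vector, so
`B ⊗ M ≅ B^r / bN`. As `b` kills `𝔪_B`, the module `bN` only depends on `N + 𝔪_B B^r`; lifting a
basis of `κ^r` adapted to the image of `N` gives a basis of `B^r` in which `bN` is `b` times a
coordinate summand `B^m`, whence `B ⊗ M ≅ B^n ⊕ (B/b)^m`, and `m ≥ 1` since some relation
survives in `B`.
-/

open TensorProduct Module IsLocalRing Submodule Pointwise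

theorem IsLocalRing.exists_sup_span_singleton_eq_of_notMem_maximalIdeal_smul {A M : Type*}
    [CommRing A] [IsLocalRing A] [AddCommGroup M] [Module A M] {I : Submodule A M} {x : M}
    (hxI : x ∈ I) (hx : x ∉ maximalIdeal A • I) :
    ∃ J : Submodule A M, maximalIdeal A • I ≤ J ∧ J ⊔ A ∙ x = I ∧ x ∉ J := by
  let S : Set (Submodule A M) := {J | maximalIdeal A • I ≤ J ∧ J ≤ I ∧ x ∉ J}
  have hchain : ∀ c ⊆ S, IsChain (· ≤ ·) c → ∀ J ∈ c, ∃ ub ∈ S, ∀ J' ∈ c, J' ≤ ub := by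
    intro c hcS hc J hJ
    refine ⟨sSup c, ⟨(hcS hJ).1.trans (le_sSup hJ), sSup_le fun J' hJ' => (hcS hJ').2.1, ?_⟩,
      fun _ => le_sSup⟩
    rw [mem_sSup_of_directed ⟨J, hJ⟩ hc.directedOn]
    rintro ⟨J', hJ', hxJ'⟩
    exact (hcS hJ').2.2 hxJ'
  obtain ⟨J, -, hJmax⟩ := zorn_le_nonempty₀ S hchain _ ⟨le_rfl, smul_le_right, hx⟩
  obtain ⟨hmJ, hJI, hxJ⟩ := hJmax.prop
  refine ⟨J, hmJ, le_antisymm (sup_le hJI ((span_singleton_le_iff_mem _ _).2 hxI)) ?_, hxJ⟩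
  intro y hyI
  by_cases hyJ : y ∈ J
  · exact mem_sup_left hyJ
  have hxy : x ∈ J ⊔ A ∙ y := by
    by_contra h
    exact hyJ (hJmax.2 ⟨hmJ.trans le_sup_left, sup_le hJI ((span_singleton_le_iff_mem _ _).2 hyI),
      h⟩ le_sup_left (mem_sup_right (mem_span_singleton_self y)))
  obtain ⟨j, hj, z, hz, rfl⟩ := mem_sup.1 hxy
  obtain ⟨a, rfl⟩ := mem_span_singleton.1 hz
  by_cases ha : IsUnit a
  · obtain ⟨u, rfl⟩ := ha
    refine mem_sup.2 ⟨-(u⁻¹ • j), J.neg_mem (J.smul_mem _ hj), u⁻¹ • (j + (u : A) • y),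
      smul_mem _ _ (mem_span_singleton_self _), ?_⟩
    rw [smul_add, Units.smul_def, Units.smul_def, smul_smul, Units.inv_mul, one_smul]
    abel
  · exact absurd (J.add_mem hj (hmJ (smul_mem_smul ((mem_maximalIdeal a).2 ha) hyI))) hxJ

theorem IsLocalRing.exists_mem_notMem_maximalIdeal_smul {A M : Type*} [CommRing A]
    [IsLocalRing A] [AddCommGroup M] [Module A M] {N : Submodule A M} (hN : N.FG) (hN0 : N ≠ ⊥) :
    ∃ x ∈ N, x ∉ maximalIdeal A • N :=
  SetLike.not_le_iff_exists.1 fun h => hN0 <|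
    eq_bot_of_le_smul_of_le_jacobson_bot _ _ hN h (jacobson_eq_maximalIdeal ⊥ bot_ne_top).ge

namespace Submodule

variable {A ι : Type*} [CommRing A]

def entryIdeal (K : Submodule A (ι → A)) : Ideal A :=
  ⨆ i, K.map (LinearMap.proj i)

theorem entryIdeal_le_iff {K : Submodule A (ι → A)} {J : Ideal A} :
    K.entryIdeal ≤ J ↔ ∀ v ∈ K, ∀ i, v i ∈ J := by
  simp only [entryIdeal, iSup_le_iff, map_le_iff_le_comap]
  exact ⟨fun h v hv i => h i hv, fun h i v hv => h v hv i⟩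

theorem apply_mem_entryIdeal {K : Submodule A (ι → A)} {v : ι → A} (hv : v ∈ K) (i : ι) :
    v i ∈ K.entryIdeal :=
  mem_iSup_of_mem i (mem_map_of_mem hv)

theorem entryIdeal_eq_bot_iff {K : Submodule A (ι → A)} : K.entryIdeal = ⊥ ↔ K = ⊥ := by
  rw [← le_bot_iff, entryIdeal_le_iff, eq_bot_iff]
  exact forall₂_congr fun v _ => by simp [funext_iff]

theorem FG.entryIdeal [Finite ι] {K : Submodule A (ι → A)} (hK : K.FG) : K.entryIdeal.FG :=
  fg_iSup _ fun _ => hK.map _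

variable (B : Type*) [CommRing B] [Algebra A B]

def baseChangePi (K : Submodule A (ι → A)) : Submodule B (ι → B) :=
  span B (K.map (LinearMap.compLeft (Algebra.linearMap A B) ι))

noncomputable def tensorQuotientEquiv [Fintype ι] [DecidableEq ι] (K : Submodule A (ι → A)) :
    B ⊗[A] ((ι → A) ⧸ K) ≃ₗ[B] (ι → B) ⧸ K.baseChangePi B :=
  TensorProduct.AlgebraTensorModule.tensorQuotientEquiv B A B K ≪≫ₗ
    Quotient.equiv _ _ (TensorProduct.piScalarRight A B B ι) (by
      change (K.baseChange B).map _ = _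
      rw [baseChange_eq_span, map_span, map_coe, baseChangePi, map_coe, Set.image_image]
      congr 2
      ext v i
      simp [Algebra.algebraMap_eq_smul_one])

end Submodule

theorem IsLocalRing.exists_surjective_entryIdeal_ker_le_maximalIdeal (A M : Type*) [CommRing A]
    [IsLocalRing A] [AddCommGroup M] [Module A M] [Module.Finite A M] :
    ∃ (r : ℕ) (π : (Fin r → A) →ₗ[A] M), Function.Surjective π ∧
      (LinearMap.ker π).entryIdeal ≤ maximalIdeal A := by
  let k := ResidueField A
  let bk := finBasis k (k ⊗[A] M)
  obtain ⟨f, hf⟩ := (TensorProduct.mk_surjective A M k Ideal.Quotient.mk_surjective).comp_left bk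
  replace hf : TensorProduct.mk A k M 1 ∘ f = bk := hf
  refine ⟨_, Fintype.linearCombination A f, ?_, entryIdeal_le_iff.2 fun v hv i => ?_⟩
  · rw [← LinearMap.range_eq_top, Fintype.range_linearCombination]
    exact span_eq_top_of_tmul_eq_basis f bk (congr_fun hf)
  · have hrel : ∑ j, residue A (v j) • bk j = 0 := by
      have := congrArg (TensorProduct.mk A k M 1) (LinearMap.mem_ker.1 hv)
      rw [Fintype.linearCombination_apply, map_sum, map_zero] at this
      convert this using 2 with j
      rw [LinearMap.map_smul, ← Function.comp_apply (f := TensorProduct.mk A k M 1), hf]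
      exact algebraMap_smul k (v j) (bk j)
    exact (residue_eq_zero_iff _).1 (Fintype.linearIndependent_iff.1 bk.linearIndependent _ hrel i)

theorem Submodule.exists_ideal_span_singleton_smul_eq {R M : Type*} [CommRing R] [AddCommGroup M]
    [Module R M] {b : R} {P : Submodule R M} (hP : P ≤ Ideal.span {b} • ⊤) :
    ∃ N : Submodule R M, Ideal.span {b} • N = P := by
  rw [ideal_span_singleton_smul, pointwise_smul_def, map_top] at hP
  refine ⟨P.comap (DistribSMul.toLinearMap R M b), ?_⟩
  rw [ideal_span_singleton_smul, pointwise_smul_def, map_comap_eq, inf_eq_right.2 hP]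

section Quotient

variable {A ι : Type*} [CommRing A] (J : Ideal A)

theorem Ideal.span_singleton_mk_mul_maximalIdeal_eq_bot [IsLocalRing A] [IsLocalRing (A ⧸ J)]
    {x : A} (hx : ∀ c ∈ maximalIdeal A, c * x ∈ J) :
    Ideal.span {Ideal.Quotient.mk J x} * maximalIdeal (A ⧸ J) = ⊥ := by
  refine eq_bot_iff.2 (Ideal.span_singleton_mul_le_iff.2 fun c hc => ?_)
  obtain ⟨c, rfl⟩ := Ideal.Quotient.mk_surjective c
  have hcm : c ∈ maximalIdeal A :=
    (mem_maximalIdeal c).2 fun hu => (mem_maximalIdeal _).1 hc (hu.map _)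
  rw [Ideal.mem_bot, ← map_mul, mul_comm, Ideal.Quotient.eq_zero_iff_mem]
  exact hx c hcm

theorem Submodule.baseChangePi_quotient_eq_bot_iff (K : Submodule A (ι → A)) :
    K.baseChangePi (A ⧸ J) = ⊥ ↔ K.entryIdeal ≤ J := by
  rw [baseChangePi, span_eq_bot, entryIdeal_le_iff]
  constructor
  · intro h v hv i
    exact Ideal.Quotient.eq_zero_iff_mem.1 (congrFun (h _ ⟨v, hv, rfl⟩) i)
  · rintro h _ ⟨v, hv, rfl⟩
    exact funext fun i => Ideal.Quotient.eq_zero_iff_mem.2 (h v hv i)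

theorem Submodule.exists_span_singleton_smul_eq_baseChangePi_quotient (K : Submodule A (ι → A))
    {x : A} (hK : K.entryIdeal ≤ J ⊔ A ∙ x) :
    ∃ N : Submodule (A ⧸ J) (ι → A ⧸ J),
      Ideal.span {Ideal.Quotient.mk J x} • N = K.baseChangePi (A ⧸ J) := by
  refine exists_ideal_span_singleton_smul_eq (span_le.2 ?_)
  rintro _ ⟨v, hv, rfl⟩
  choose a j hj hv using fun i => Ideal.mem_span_singleton_sup.1
    (sup_comm J (A ∙ x) ▸ hK (apply_mem_entryIdeal hv i))
  rw [SetLike.mem_coe, ideal_span_singleton_smul, pointwise_smul_def, map_top]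
  refine ⟨fun i => Ideal.Quotient.mk J (a i), funext fun i => ?_⟩
  simp [← hv i, Ideal.Quotient.eq_zero_iff_mem.2 (hj i), mul_comm]

end Quotient

theorem Submodule.smul_sup_smul_top_of_mul_eq_bot {R M : Type*} [CommRing R] [AddCommGroup M]
    [Module R M] {I 𝔞 : Ideal R} (h : I * 𝔞 = ⊥) (N : Submodule R M) :
    I • (N ⊔ 𝔞 • ⊤) = I • N := by
  rw [smul_sup, ← Submodule.smul_assoc, smul_eq_mul, h, bot_smul, sup_bot_eq]

theorem Submodule.ideal_smul_span_single_inr_eq_pi {R : Type*} [CommRing R] {σ τ : Type*}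
    [Fintype σ] [Fintype τ] [DecidableEq σ] [DecidableEq τ] (I : Ideal R) :
    I • span R (Set.range fun j : τ => (Pi.single (Sum.inr j) 1 : σ ⊕ τ → R)) =
      pi Set.univ (Sum.elim (fun _ => ⊥) (fun _ => I)) := by
  apply le_antisymm
  · have hspan : span R (Set.range fun j : τ => (Pi.single (Sum.inr j) 1 : σ ⊕ τ → R)) ≤
        pi Set.univ (Sum.elim (fun _ => ⊥) (fun _ => ⊤)) := by
      rw [span_le]
      rintro _ ⟨j, rfl⟩ (i | i) - <;> simp
    refine smul_le.2 fun r hr y hy => ?_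
    rintro (i | i) -
    · have := hspan hy (Sum.inl i) (Set.mem_univ _)
      simp_all
    · exact I.mul_mem_right _ hr
  · intro y hy
    have hyl : ∀ i, y (Sum.inl i) = 0 := fun i => by simpa using hy (Sum.inl i) (Set.mem_univ _)
    have hsum : ∑ j, y (Sum.inr j) • (Pi.single (Sum.inr j) 1 : σ ⊕ τ → R) = y := by
      simp_rw [← Pi.single_smul', smul_eq_mul, mul_one]
      conv_rhs => rw [← Finset.univ_sum_single y]
      simp [Fintype.sum_sum_type, hyl]
    rw [← hsum]
    exact sum_mem fun j _ =>
      smul_mem_smul (hy (Sum.inr j) (Set.mem_univ _)) (subset_span ⟨j, rfl⟩)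

noncomputable def Module.Basis.quotientIdealSmulSpanInrEquiv {R F : Type*} [CommRing R]
    [AddCommGroup F] [Module R F] {σ τ : Type*} [Fintype σ] [Fintype τ] [DecidableEq σ]
    [DecidableEq τ] (e : Basis (σ ⊕ τ) R F) (I : Ideal R) :
    (F ⧸ I • span R (Set.range (e ∘ Sum.inr))) ≃ₗ[R] (σ → R) × (τ → R ⧸ I) :=
  Quotient.equiv _ (pi Set.univ (Sum.elim (fun _ => ⊥) fun _ => I)) e.equivFun (by
      rw [map_smul'', map_span, ← Set.range_comp, ← ideal_smul_span_single_inr_eq_pi I]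
      congr 3
      ext j i
      simp [Pi.single_apply, eq_comm]) ≪≫ₗ
    quotientPi _ ≪≫ₗ LinearEquiv.sumPiEquivProdPi R σ τ _ ≪≫ₗ
    (LinearEquiv.piCongrRight fun _ => quotEquivOfEqBot ⊥ rfl).prodCongr (LinearEquiv.refl R _)

theorem Submodule.exists_basis_span_range_inr_eq {K V : Type*} [DivisionRing K] [AddCommGroup V]
    [Module K V] [FiniteDimensional K V] (W : Submodule K V) :
    ∃ (n m : ℕ) (w : Basis (Fin n ⊕ Fin m) K V), span K (Set.range (w ∘ Sum.inr)) = W := by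
  obtain ⟨W', hW'⟩ := W.exists_isCompl
  let bW := finBasis K W
  refine ⟨_, _, ((finBasis K W').prod bW).map (prodEquivOfIsCompl W' W hW'.symm), ?_⟩
  have : ((finBasis K W').prod bW).map (prodEquivOfIsCompl W' W hW'.symm) ∘ Sum.inr =
      W.subtype ∘ bW := by
    ext j
    simp
  rw [this, Set.range_comp, ← map_span, bW.span_eq, map_top, range_subtype]

theorem IsLocalRing.exists_basis_sup_maximalIdeal_smul_top_eq {B F : Type*} [CommRing B]
    [IsLocalRing B] [AddCommGroup F] [Module B F] [Module.Free B F] [Module.Finite B F]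
    (N : Submodule B F) :
    ∃ (n m : ℕ) (e : Basis (Fin n ⊕ Fin m) B F),
      N ⊔ maximalIdeal B • ⊤ = span B (Set.range (e ∘ Sum.inr)) ⊔ maximalIdeal B • ⊤ := by
  let k := ResidueField B
  let μ := TensorProduct.mk B k F 1
  have hμ : ∀ s : Set F,
      span B s ⊔ maximalIdeal B • ⊤ = ((span k (μ '' s)).restrictScalars B).comap μ := by
    intro s
    rw [restrictScalars_span B k Ideal.Quotient.mk_surjective, ← map_span, comap_map_eq]
    exact congrArg _ (LinearMap.ker_tensorProductMk F).symm
  obtain ⟨n, m, w, hw⟩ := (span k (μ '' N)).exists_basis_span_range_inr_eq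
  obtain ⟨v, hv⟩ := (TensorProduct.mk_surjective B F k Ideal.Quotient.mk_surjective).comp_left w
  replace hv : μ ∘ v = w := hv
  let e := Basis.mk (IsLocalRing.linearIndependent_of_flat v (hv ▸ w.linearIndependent))
    (span_eq_top_of_tmul_eq_basis v w (congr_fun hv)).ge
  refine ⟨n, m, e, ?_⟩
  rw [← span_eq N, hμ, hμ, ← hw, ← Set.range_comp]
  congr
  ext j
  simp [e, μ, ← hv]

theorem IsLocalRing.exists_quotient_ideal_smul_equiv {B F : Type*} [CommRing B] [IsLocalRing B]
    [AddCommGroup F] [Module B F] [Module.Free B F] [Module.Finite B F] {I : Ideal B}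
    (hI : I * maximalIdeal B = ⊥) (N : Submodule B F) (hN : I • N ≠ ⊥) :
    ∃ n m : ℕ, 1 ≤ m ∧ Nonempty ((F ⧸ I • N) ≃ₗ[B] (Fin n → B) × (Fin m → B ⧸ I)) := by
  obtain ⟨n, m, e, he⟩ := exists_basis_sup_maximalIdeal_smul_top_eq N
  have hIN : I • N = I • span B (Set.range (e ∘ Sum.inr)) := by
    rw [← smul_sup_smul_top_of_mul_eq_bot hI N, he, smul_sup_smul_top_of_mul_eq_bot hI]
  refine ⟨n, m, Nat.one_le_iff_ne_zero.2 ?_,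
    ⟨quotEquivOfEq _ _ hIN ≪≫ₗ e.quotientIdealSmulSpanInrEquiv I⟩⟩
  rintro rfl
  exact hN (by simp [hIN, Set.range_eq_empty])

/-- Let `(A, 𝔪)` be a local ring and `M` a finitely presented `A`-module that is not free.
Then there is a local homomorphism `A → B`, an element `b ∈ B` with `b ≠ 0`, `b ^ 2 = 0`,
and integers `n ≥ 0`, `m ≥ 1` with `M ⊗[A] B ≅ B ^ n ⊕ (B ⧸ (b)) ^ m` as `B`-modules. -/
theorem stmt0 (A : Type) [CommRing A] [IsLocalRing A]
    (M : Type) [AddCommGroup M] [Module A M] [Module.FinitePresentation A M]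
    (hMfree : ¬ Module.Free A M) :
    ∃ (B : Type) (_ : CommRing B) (_ : IsLocalRing B) (_ : Algebra A B),
      IsLocalHom (algebraMap A B) ∧
      ∃ b : B, b ≠ 0 ∧ b ^ 2 = 0 ∧
        ∃ n m : ℕ, 1 ≤ m ∧
          Nonempty ((B ⊗[A] M) ≃ₗ[B]
            ((Fin n → B) × (Fin m → B ⧸ Ideal.span {b}))) := by
  obtain ⟨r, π, hπ, hKm⟩ := exists_surjective_entryIdeal_ker_le_maximalIdeal A M
  set K := LinearMap.ker π
  have hK : K ≠ ⊥ := fun h => hMfree (.of_equiv (.ofBijective π ⟨LinearMap.ker_eq_bot.1 h, hπ⟩))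
  obtain ⟨x, hxI, hx⟩ := exists_mem_notMem_maximalIdeal_smul
    (FinitePresentation.fg_ker π hπ).entryIdeal (entryIdeal_eq_bot_iff.not.2 hK)
  obtain ⟨J, hmJ, hJx, hxJ⟩ := exists_sup_span_singleton_eq_of_notMem_maximalIdeal_smul hxI hx
  have hJm : J ≤ maximalIdeal A := (le_sup_left.trans hJx.le).trans hKm
  have : Nontrivial (A ⧸ J) := Ideal.Quotient.nontrivial_iff.2 fun h => hxJ (h ▸ trivial)
  have : IsLocalRing (A ⧸ J) := .of_surjective' _ Ideal.Quotient.mk_surjective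
  have hxm : ∀ c ∈ maximalIdeal A, c * x ∈ J := fun c hc => hmJ (smul_mem_smul hc hxI)
  obtain ⟨N, hN⟩ := exists_span_singleton_smul_eq_baseChangePi_quotient J K hJx.ge
  have hN0 : Ideal.span {Ideal.Quotient.mk J x} • N ≠ ⊥ := by
    rw [hN, Ne, baseChangePi_quotient_eq_bot_iff]
    exact fun h => hxJ (h hxI)
  obtain ⟨n, m, hm, ⟨e⟩⟩ := exists_quotient_ideal_smul_equiv
    (Ideal.span_singleton_mk_mul_maximalIdeal_eq_bot J hxm) N hN0
  refine ⟨A ⧸ J, _, ‹_›, _, isLocalHom_of_le_jacobson_bot J ?_, Ideal.Quotient.mk J x,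
    mt Ideal.Quotient.eq_zero_iff_mem.1 hxJ, ?_, n, m, hm,
    ⟨(π.quotKerEquivOfSurjective hπ).symm.baseChange A (A ⧸ J) _ _ ≪≫ₗ
      K.tensorQuotientEquiv (A ⧸ J) ≪≫ₗ quotEquivOfEq _ _ hN.symm ≪≫ₗ e⟩⟩
  · rwa [jacobson_eq_maximalIdeal ⊥ bot_ne_top]
  · rw [sq, ← map_mul, Ideal.Quotient.eq_zero_iff_mem]
    exact hxm x (hKm hxI)
end

section
/- Let $k$ be a commutative ring and $I \subseteq k$ an ideal with $I^2 = 0$. Let $f : A \to B$ be a morphism of $k$-algebras such that $B$ is flat as a $k$-module and the induced map $A/IA \to B/IB$ is an isomorphism. Then $f$ is an isomorphism. -/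
/-!
Since `I ^ 2 = 0`, a module `Q` with `Q = I • Q` vanishes. Surjectivity modulo `I` gives
`B = f(A) + I • B`, so `B / f(A)` is such a module. For injectivity, flatness of `B` gives
`ker f ∩ I • A = I • ker f`, and injectivity modulo `I` puts `ker f` inside `I • A`; hence
`ker f = I • ker f`.
-/

section SquareZero

variable {R M N : Type*} [CommSemiring R] [AddCommMonoid M] [Module R M]
  [AddCommMonoid N] [Module R N] {I : Ideal R}

theorem Submodule.eq_bot_of_le_smul_of_sq_eq_bot (hI : I ^ 2 = ⊥) {K : Submodule R M}
    (h : K ≤ I • K) : K = ⊥ :=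
  eq_bot_iff.mpr <| calc
    K ≤ I • K := h
    _ ≤ I • I • K := Submodule.smul_mono le_rfl h
    _ = ⊥ := by
      rw [← Submodule.smul_assoc, Ideal.smul_eq_mul, ← pow_two, hI, Submodule.bot_smul]

theorem Submodule.eq_top_of_sup_smul_top_eq_top_of_sq_eq_bot (hI : I ^ 2 = ⊥)
    {P : Submodule R N} (h : P ⊔ I • ⊤ = ⊤) : P = ⊤ := by
  have hIP : I • (⊤ : Submodule R N) ≤ P := calc
    I • (⊤ : Submodule R N) = I • (P ⊔ I • ⊤) := by rw [h]
    _ = I • P ⊔ (I ^ 2) • ⊤ := by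
      rw [Submodule.smul_sup, ← Submodule.smul_assoc, Ideal.smul_eq_mul, ← pow_two]
    _ = I • P := by rw [hI, Submodule.bot_smul, sup_bot_eq]
    _ ≤ P := Submodule.smul_le_right
  rw [eq_top_iff, ← h]
  exact sup_le le_rfl hIP

theorem LinearMap.surjective_of_range_sup_smul_top_eq_top (hI : I ^ 2 = ⊥) (f : M →ₗ[R] N)
    (h : LinearMap.range f ⊔ I • ⊤ = ⊤) : Function.Surjective f :=
  LinearMap.range_eq_top.mp (Submodule.eq_top_of_sup_smul_top_eq_top_of_sq_eq_bot hI h)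

end SquareZero

theorem LinearMap.injective_of_flat_of_sq_eq_bot {R M N : Type*} [CommRing R]
    [AddCommGroup M] [Module R M] [AddCommGroup N] [Module R N] [Module.Flat R N]
    {I : Ideal R} (hI : I ^ 2 = ⊥) (f : M →ₗ[R] N) (hf : Function.Surjective f)
    (h : (I • ⊤ : Submodule R N).comap f ≤ I • ⊤) : Function.Injective f := by
  have hker : LinearMap.ker f ≤ I • ⊤ := fun x hx =>
    h (by simp [LinearMap.mem_ker.mp hx])
  have hker_smul : LinearMap.ker f = I • LinearMap.ker f := by
    rw [← LinearMap.ker_inf_smul_top_eq_smul_of_flat I f hf, inf_eq_left.mpr hker]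
  exact LinearMap.ker_eq_bot.mp
    (Submodule.eq_bot_of_le_smul_of_sq_eq_bot hI hker_smul.le)

/-- Let `k` be a commutative ring, `I` an ideal with `I ^ 2 = 0`, and `f : A → B` a morphism
of `k`-algebras with `B` flat over `k` such that the induced map `A⧸IA → B⧸IB` is an
isomorphism. Then `f` is an isomorphism. -/
theorem stmt3 (k : Type) [CommRing k] (I : Ideal k) (hI : I ^ 2 = ⊥)
    (A B : Type) [CommRing A] [CommRing B] [Algebra k A] [Algebra k B]
    [Module.Flat k B] (f : A →ₐ[k] B)
    (hle : I.map (algebraMap k A) ≤ (I.map (algebraMap k B)).comap f.toRingHom)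
    (hiso : Function.Bijective
      (Ideal.quotientMap (I.map (algebraMap k B)) f.toRingHom hle)) :
    Function.Bijective f := by
  have hrange : LinearMap.range f.toLinearMap ⊔ I • ⊤ = ⊤ := by
    refine eq_top_iff.mpr fun b _ => ?_
    obtain ⟨a', ha'⟩ := hiso.2 (Ideal.Quotient.mk _ b)
    obtain ⟨a, rfl⟩ := Ideal.Quotient.mk_surjective a'
    rw [Ideal.quotientMap_mk, Ideal.Quotient.mk_eq_mk_iff_sub_mem] at ha'
    have hfa : f a ∈ LinearMap.range f.toLinearMap := LinearMap.mem_range_self _ a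
    have hdiff : f a - b ∈ I • (⊤ : Submodule k B) := by
      rwa [Ideal.smul_top_eq_map]
    simpa using sub_mem (Submodule.mem_sup_left hfa) (Submodule.mem_sup_right hdiff)
  have hsurj := LinearMap.surjective_of_range_sup_smul_top_eq_top hI _ hrange
  have hker : (I • ⊤ : Submodule k B).comap f.toLinearMap ≤ I • ⊤ := by
    intro a ha
    rw [Submodule.mem_comap, Ideal.smul_top_eq_map, Submodule.restrictScalars_mem,
      ← Ideal.Quotient.eq_zero_iff_mem] at ha
    rw [Ideal.smul_top_eq_map, Submodule.restrictScalars_mem, ← Ideal.Quotient.eq_zero_iff_mem]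
    apply hiso.1
    rwa [map_zero, Ideal.quotientMap_mk]
  exact ⟨LinearMap.injective_of_flat_of_sq_eq_bot hI _ hsurj hker, hsurj⟩
end

section
/- Let $B$ be a local ring with maximal ideal $\overline{\mathfrak{m}}$, and let $b \in B$ with $b \neq 0$, $b^2 = 0$, and $\overline{\mathfrak{m}}b = 0$. Let $\alpha : B^m \to B^n$ be a $B$-linear map whose matrix has all entries in the ideal $(b)$. Then the cokernel of $\alpha$ is isomorphic as a $B$-module to $B^{n-r} \oplus (B/(b))^{r}$ for some $0 \leq r \leq \min(m,n)$. -/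
/-!
Write the columns of `α` as `b • wⱼ`. Adding the columns one at a time, their span stays,
up to an automorphism of `Bⁿ`, of the form `⨁_{i ∈ S} (b) eᵢ`. As `𝔪 b = 0`, a new column
`b • w` already lies in it unless some `w i` with `i ∉ S` is a unit; in that case a
transvection fixing the old submodule moves `b • w` to `b (w i) eᵢ`, and `S` grows by `i`.
The cokernel of `⨁_{i ∈ S} (b) eᵢ` is visibly `B^(n - #S) × (B ⧸ (b))^#S`.
-/

open Submodule Finset

theorem map_transvection_eq_of_le_ker {R M : Type*} [Ring R] [AddCommGroup M] [Module R M]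
    {f : Module.Dual R M} {v : M} (hfv : f v = 0) {W : Submodule R M}
    (hW : W ≤ LinearMap.ker f) :
    W.map (LinearEquiv.transvection hfv).toLinearMap = W :=
  LinearEquiv.mem_stabilizer_submodule_of_le_fixedSubmodule
    (hW.trans (LinearEquiv.ker_le_fixedSubmodule_transvection hfv))

section

variable {B : Type*} [CommRing B] {ι : Type*} [DecidableEq ι]

def stdSubmodule (b : B) (S : Finset ι) : Submodule B (ι → B) :=
  pi Set.univ fun i => if i ∈ S then Ideal.span {b} else ⊥

theorem mem_stdSubmodule {b : B} {S : Finset ι} {x : ι → B} :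
    x ∈ stdSubmodule b S ↔
      ∀ i, x i ∈ (if i ∈ S then Ideal.span {b} else ⊥ : Submodule B B) := by
  simp [stdSubmodule, Submodule.mem_pi]

theorem stdSubmodule_sup_span_single (b : B) (S : Finset ι) (i : ι) :
    stdSubmodule b S ⊔ span B {Pi.single i b} = stdSubmodule b (insert i S) := by
  apply le_antisymm
  · refine sup_le (pi_mono fun j _ => ?_) ((span_singleton_le_iff_mem _ _).2 ?_)
    · split_ifs <;> simp_all
    · rw [mem_stdSubmodule]
      intro j
      rcases eq_or_ne j i with rfl | hj
      · simp
      · simp [hj]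
  · intro x hx
    rw [mem_stdSubmodule] at hx
    have hxi : x i ∈ Ideal.span {b} := by simpa using hx i
    obtain ⟨c, hc⟩ := Ideal.mem_span_singleton'.1 hxi
    rw [← sub_add_cancel x (Pi.single i (x i))]
    refine add_mem_sup ?_
      (mem_span_singleton.2 ⟨c, by rw [← hc, ← smul_eq_mul, Pi.single_smul']⟩)
    rw [mem_stdSubmodule]
    intro j
    rcases eq_or_ne j i with rfl | hj
    · simp
    · simpa [hj] using hx j

noncomputable def quotStdSubmoduleEquiv [Fintype ι] (b : B) (S : Finset ι) :
    ((ι → B) ⧸ stdSubmodule b S) ≃ₗ[B]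
      (Fin (Fintype.card ι - #S) → B) × (Fin #S → B ⧸ Ideal.span {b}) :=
  let p : ι → Submodule B B := fun i => if i ∈ S then Ideal.span {b} else ⊥
  let σ : {i // i ∉ S} ≃ Fin (Fintype.card ι - #S) :=
    Fintype.equivFinOfCardEq (by rw [Fintype.card_subtype_compl, Fintype.card_coe])
  let e : Fin #S ⊕ Fin (Fintype.card ι - #S) ≃ ι :=
    (S.equivFin.symm.sumCongr σ.symm).trans (Equiv.sumCompl (· ∈ S))
  Submodule.quotientPi p ≪≫ₗ (LinearEquiv.piCongrLeft B (fun i => B ⧸ p i) e).symm ≪≫ₗ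
    LinearEquiv.sumPiEquivProdPi B _ _ _ ≪≫ₗ
    ((LinearEquiv.piCongrRight fun j =>
        quotEquivOfEq _ _ (if_pos (S.equivFin.symm j).2)).prodCongr
      (LinearEquiv.piCongrRight fun j => quotEquivOfEqBot _ (if_neg (σ.symm j).2))) ≪≫ₗ
    LinearEquiv.prodComm B _ _

variable [IsLocalRing B]

theorem exists_map_stdSubmodule_sup_span_smul {b : B}
    (hmb : ∀ x ∈ IsLocalRing.maximalIdeal B, x * b = 0) (S : Finset ι) (w : ι → B) :
    ∃ T : Finset ι, #T ≤ #S + 1 ∧ ∃ e : (ι → B) ≃ₗ[B] (ι → B),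
      (stdSubmodule b S ⊔ span B {b • w}).map e.toLinearMap = stdSubmodule b T := by
  by_cases hw : ∃ i ∉ S, IsUnit (w i)
  · obtain ⟨i, hiS, u, hu⟩ := hw
    -- `x ↦ x + x i • y` fixes `stdSubmodule b S` (whose `i`-th coordinates vanish)
    -- and clears every coordinate of `b • w` but the `i`-th.
    set y : ι → B := Function.update (-(↑u⁻¹ • w)) i 0
    have hy : LinearMap.proj (R := B) (φ := fun _ => B) i y = 0 := by simp [y]
    refine ⟨insert i S, card_insert_le _ _, LinearEquiv.transvection hy, ?_⟩
    have hstd : stdSubmodule b S ≤ LinearMap.ker (LinearMap.proj i) := fun x hx => by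
      simpa [hiS] using mem_stdSubmodule.1 hx i
    have hbw : LinearEquiv.transvection hy (b • w) = (u : B) • Pi.single i b := by
      rw [LinearEquiv.transvection.apply]
      ext j
      rcases eq_or_ne j i with rfl | hj
      · simp [y, hu, mul_comm]
      · simp [y, hj, ← hu, Units.smul_def, ← mul_assoc]
    rw [Submodule.map_sup, map_transvection_eq_of_le_ker hy hstd, map_span, Set.image_singleton,
      LinearEquiv.coe_coe, hbw, span_singleton_smul_eq u.isUnit, stdSubmodule_sup_span_single]
  · push Not at hw
    -- `𝔪 b = 0` kills the coordinates of `b • w` outside `S`.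
    have hbw : b • w ∈ stdSubmodule b S := by
      refine mem_stdSubmodule.2 fun i => ?_
      split_ifs with hi
      · exact Ideal.mul_mem_right _ _ (Ideal.mem_span_singleton_self b)
      · rw [mem_bot, Pi.smul_apply, smul_eq_mul, mul_comm]
        exact hmb _ ((IsLocalRing.mem_maximalIdeal _).2 (hw i hi))
    refine ⟨S, by omega, LinearEquiv.refl B _, ?_⟩
    rw [sup_eq_left.2 ((span_singleton_le_iff_mem _ _).2 hbw)]
    exact map_id _

theorem exists_map_span_smul_eq_stdSubmodule {b : B}
    (hmb : ∀ x ∈ IsLocalRing.maximalIdeal B, x * b = 0) {m : ℕ} (w : Fin m → ι → B) :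
    ∃ S : Finset ι, #S ≤ m ∧ ∃ e : (ι → B) ≃ₗ[B] (ι → B),
      (span B (Set.range (b • w))).map e.toLinearMap = stdSubmodule b S := by
  induction m with
  | zero => exact ⟨∅, by simp, .refl B _, by simp [stdSubmodule]⟩
  | succ m ih =>
    obtain ⟨S, hS, e, he⟩ := ih (Fin.tail w)
    obtain ⟨T, hT, e', he'⟩ := exists_map_stdSubmodule_sup_span_smul hmb S (e (w 0))
    refine ⟨T, by omega, e ≪≫ₗ e', ?_⟩
    have hspan : span B (Set.range (b • w)) =
        span B {b • w 0} ⊔ span B (Set.range (b • Fin.tail w)) := by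
      rw [Fin.range_fin_succ, span_insert]; rfl
    rw [hspan, LinearEquiv.coe_trans, map_comp, Submodule.map_sup, he, map_span,
      Set.image_singleton, LinearEquiv.coe_coe, map_smul, sup_comm, he']

end

theorem stmt11_general (B : Type) [CommRing B] [IsLocalRing B] (b : B)
    (hmb : ∀ x ∈ IsLocalRing.maximalIdeal B, x * b = 0)
    (m n : ℕ) (α : (Fin m → B) →ₗ[B] (Fin n → B))
    (hmat : ∀ (i : Fin n) (j : Fin m),
      LinearMap.toMatrix (Pi.basisFun B (Fin m)) (Pi.basisFun B (Fin n)) α i j ∈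
        Ideal.span {b}) :
    ∃ r : ℕ, r ≤ min m n ∧
      Nonempty (((Fin n → B) ⧸ LinearMap.range α) ≃ₗ[B]
        ((Fin (n - r) → B) × (Fin r → B ⧸ Ideal.span {b}))) := by
  choose U hU using fun i j => Ideal.mem_span_singleton'.1 (hmat i j)
  simp only [LinearMap.toMatrix_apply, Pi.basisFun_apply, Pi.basisFun_repr] at hU
  have hα : LinearMap.range α = span B (Set.range (b • fun j i => U i j)) := by
    rw [← Matrix.toLin'_toMatrix' α, Matrix.range_toLin']
    congr 2
    ext j i
    simp [← hU, mul_comm]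
  obtain ⟨S, hSm, e, he⟩ := exists_map_span_smul_eq_stdSubmodule hmb fun j i => U i j
  have hSn : #S ≤ n := by simpa using card_le_univ S
  have q := quotStdSubmoduleEquiv b S
  rw [Fintype.card_fin] at q
  exact ⟨#S, le_min hSm hSn, ⟨Submodule.Quotient.equiv _ _ e (hα ▸ he) ≪≫ₗ q⟩⟩

/-- Let `(B, 𝔪)` be local, `b ≠ 0` with `b ^ 2 = 0` and `𝔪 b = 0`, and let `α : B^m → B^n`
be a linear map all of whose matrix entries lie in `(b)`. Then
`coker α ≅ B^(n-r) ⊕ (B⧸(b))^r` for some `0 ≤ r ≤ min m n`. -/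
theorem stmt11 (B : Type) [CommRing B] [IsLocalRing B] (b : B) (hb : b ≠ 0)
    (hb2 : b ^ 2 = 0) (hmb : ∀ x ∈ IsLocalRing.maximalIdeal B, x * b = 0)
    (m n : ℕ) (α : (Fin m → B) →ₗ[B] (Fin n → B))
    (hmat : ∀ (i : Fin n) (j : Fin m),
      LinearMap.toMatrix (Pi.basisFun B (Fin m)) (Pi.basisFun B (Fin n)) α i j ∈
        Ideal.span {b}) :
    ∃ r : ℕ, r ≤ min m n ∧
      Nonempty (((Fin n → B) ⧸ LinearMap.range α) ≃ₗ[B]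
        ((Fin (n - r) → B) × (Fin r → B ⧸ Ideal.span {b}))) :=
  stmt11_general B b hmb m n α hmat
end

section
/- Let $(A,\mathfrak{m})$ be a local ring, $M$ a finitely presented $A$-module, $A^m \xrightarrow{\alpha} A^n \to M \to 0$ a minimal presentation, and $I$ the ideal generated by the entries of a matrix of $\alpha$. Then for any ideal $J \subseteq \mathfrak{m}$, $M/JM$ is a free $A/J$-module if and only if $I \subseteq J$. -/
open TensorProduct

/-- Let `(A, 𝔪)` be local, `A^m → A^n → M → 0` a minimal presentation of the finitely
presented module `M`, `I` the ideal generated by the matrix entries of `α`, and `J ⊆ 𝔪` any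
ideal. Then `M⧸JM` is a free `A⧸J`-module iff `I ⊆ J`. -/
theorem stmt16 (A : Type) [CommRing A] [IsLocalRing A]
    (M : Type) [AddCommGroup M] [Module A M] [Module.FinitePresentation A M]
    (m n : ℕ) (α : (Fin m → A) →ₗ[A] (Fin n → A)) (β : (Fin n → A) →ₗ[A] M)
    (hsurj : Function.Surjective β) (hexact : LinearMap.range α = LinearMap.ker β)
    (hmin : n = Module.finrank (IsLocalRing.ResidueField A)
      (IsLocalRing.ResidueField A ⊗[A] M))
    (I : Ideal A)
    (hI : I = Ideal.span (Set.range fun p : Fin n × Fin m =>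
      LinearMap.toMatrix (Pi.basisFun A (Fin m)) (Pi.basisFun A (Fin n)) α p.1 p.2))
    (J : Ideal A) (hJ : J ≤ IsLocalRing.maximalIdeal A) :
    Module.Free (A ⧸ J) ((A ⧸ J) ⊗[A] M) ↔ I ≤ J := by
  classical
  have hJtop : J ≠ ⊤ := fun h =>
    (IsLocalRing.maximalIdeal.isMaximal A).ne_top (top_le_iff.mp (h ▸ hJ))
  haveI : Nontrivial (A ⧸ J) := Ideal.Quotient.nontrivial_iff.mpr hJtop
  set B := A ⧸ J with hB
  -- the matrix entries
  have hentry : ∀ i j, LinearMap.toMatrix (Pi.basisFun A (Fin m)) (Pi.basisFun A (Fin n))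
      α i j = α (Pi.basisFun A (Fin m) j) i := by
    intro i j
    rw [LinearMap.toMatrix_apply, Pi.basisFun_repr]
  -- exactness of the base-changed sequence
  have hex : Function.Exact (α.baseChange B) (β.baseChange B) := by
    have h0 : Function.Exact α β := LinearMap.exact_iff.mpr hexact.symm
    have h1 := lTensor_exact B h0 hsurj
    rwa [← LinearMap.baseChange_eq_ltensor, ← LinearMap.baseChange_eq_ltensor] at h1
  have hf2surj : Function.Surjective (β.baseChange B) := by
    have := LinearMap.lTensor_surjective (N := Fin n → A) B hsurj
    rwa [← LinearMap.baseChange_eq_ltensor] at this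
  -- basis of B ⊗ A^n
  have hrepr : ∀ (x : B) (w : Fin n → A) (i : Fin n),
      ((Pi.basisFun A (Fin n)).baseChange B).repr (x ⊗ₜ w) i
        = Ideal.Quotient.mk J (w i) * x := by
    intro x w i
    rw [Module.Basis.baseChange_repr_tmul, Pi.basisFun_repr, Algebra.smul_def]
    rfl
  constructor
  · -- free → I ≤ J
    intro hfree
    -- residue field setup
    letI : Algebra B (IsLocalRing.ResidueField A) :=
      (Ideal.Quotient.factor hJ).toAlgebra
    haveI : IsScalarTower A B (IsLocalRing.ResidueField A) := IsScalarTower.of_algebraMap_eq fun a => rfl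
    haveI : Module.Finite A M := Module.Finite.of_surjective β hsurj
    haveI : Module.Finite B (B ⊗[A] M) := inferInstance
    set ι := Module.Free.ChooseBasisIndex B (B ⊗[A] M) with hι
    let bP : Module.Basis ι B (B ⊗[A] M) := Module.Free.chooseBasis B (B ⊗[A] M)
    have hcard : Fintype.card ι = n := by
      have h1 : Module.finrank (IsLocalRing.ResidueField A)
          ((IsLocalRing.ResidueField A) ⊗[B] (B ⊗[A] M)) = Fintype.card ι :=
        Module.finrank_eq_card_basis (bP.baseChange (IsLocalRing.ResidueField A))
      have h2 : Module.finrank (IsLocalRing.ResidueField A)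
          ((IsLocalRing.ResidueField A) ⊗[B] (B ⊗[A] M))
          = Module.finrank (IsLocalRing.ResidueField A) ((IsLocalRing.ResidueField A) ⊗[A] M) :=
        (TensorProduct.AlgebraTensorModule.cancelBaseChange A B
          (IsLocalRing.ResidueField A) (IsLocalRing.ResidueField A) M).finrank_eq
      omega
    let eqv : ι ≃ Fin n := Fintype.equivFinOfCardEq hcard
    let eP : (B ⊗[A] M) ≃ₗ[B] (Fin n → B) := (bP.reindex eqv).equivFun
    let eN : (B ⊗[A] (Fin n → A)) ≃ₗ[B] (Fin n → B) :=
      ((Pi.basisFun A (Fin n)).baseChange B).equivFun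
    let g : (Fin n → B) →ₗ[B] (Fin n → B) :=
      eP.toLinearMap ∘ₗ (β.baseChange B) ∘ₗ eN.symm.toLinearMap
    have hgsurj : Function.Surjective g := by
      simp only [g, LinearMap.coe_comp, LinearEquiv.coe_coe]
      exact eP.surjective.comp (hf2surj.comp eN.symm.surjective)
    have hginj : Function.Injective g :=
      OrzechProperty.injective_of_surjective_endomorphism g hgsurj
    have hf2inj : Function.Injective (β.baseChange B) := by
      intro x y hxy
      have : g (eN x) = g (eN y) := by
        simp only [g, LinearMap.coe_comp, Function.comp_apply, LinearEquiv.coe_coe,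
          LinearEquiv.symm_apply_apply, hxy]
      exact eN.injective (hginj this)
    have hker : LinearMap.ker (β.baseChange B) = ⊥ := LinearMap.ker_eq_bot.mpr hf2inj
    have hrange : LinearMap.range (α.baseChange B) = ⊥ := by
      rw [← hex.linearMap_ker_eq, hker]
    have hf1zero : α.baseChange B = 0 := LinearMap.range_eq_bot.mp hrange
    rw [hI, Ideal.span_le]
    rintro x ⟨⟨i, j⟩, rfl⟩
    simp only [hentry]
    have h0 : (α.baseChange B) ((1 : B) ⊗ₜ (Pi.basisFun A (Fin m) j)) = 0 := by
      rw [hf1zero]; rfl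
    rw [LinearMap.baseChange_tmul] at h0
    have := congrArg (fun z => ((Pi.basisFun A (Fin n)).baseChange B).repr z i) h0
    simp only [map_zero, Finsupp.coe_zero, Pi.zero_apply] at this
    rw [hrepr, mul_one] at this
    exact Ideal.Quotient.eq_zero_iff_mem.mp this
  · -- I ≤ J → free
    intro hIJ
    have hαmem : ∀ v (i : Fin n), α v i ∈ J := by
      intro v i
      apply hIJ
      rw [hI]
      have hv : v = ∑ j, v j • Pi.basisFun A (Fin m) j := by
        conv_lhs => rw [← (Pi.basisFun A (Fin m)).sum_repr v]
        simp [Pi.basisFun_repr]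
      rw [hv, map_sum]
      simp only [map_smul]
      rw [Finset.sum_apply]
      apply Ideal.sum_mem
      intro j _
      simp only [Pi.smul_apply, smul_eq_mul]
      exact Ideal.mul_mem_left _ _
        (Ideal.subset_span ⟨(i, j), hentry i j⟩)
    have htmulzero : ∀ (x : B) (w : Fin n → A), (∀ i, w i ∈ J) →
        (x ⊗ₜ w : B ⊗[A] (Fin n → A)) = 0 := by
      intro x w hw
      have : ((Pi.basisFun A (Fin n)).baseChange B).repr (x ⊗ₜ w) = 0 := by
        ext i
        rw [hrepr]
        simp [Ideal.Quotient.eq_zero_iff_mem.mpr (hw i)]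
      exact (((Pi.basisFun A (Fin n)).baseChange B).repr.map_eq_zero_iff).mp this
    have hf1zero : α.baseChange B = 0 := by
      apply TensorProduct.AlgebraTensorModule.ext
      intro x v
      simp only [LinearMap.baseChange_tmul, LinearMap.zero_apply]
      exact htmulzero x (α v) (fun i => hαmem v i)
    have hker : LinearMap.ker (β.baseChange B) = ⊥ := by
      rw [hex.linearMap_ker_eq, hf1zero, LinearMap.range_zero]
    let e : (B ⊗[A] (Fin n → A)) ≃ₗ[B] (B ⊗[A] M) :=
      LinearEquiv.ofBijective (β.baseChange B) ⟨LinearMap.ker_eq_bot.mp hker, hf2surj⟩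
    haveI : Module.Free B (B ⊗[A] (Fin n → A)) :=
      Module.Free.of_basis ((Pi.basisFun A (Fin n)).baseChange B)
    exact Module.Free.of_equiv e
end
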